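/- Let n ≥ 5 and let r, r' be integers with 2 ≤ r < r' and 2r' - 1 ≤ n. Then in S_n the following exchange law holds: t_{2r'-1} · t_{2r-1} = ∏_{i=2}^{r} (t_{2i-1}^{-1} · u_{2i}) · t_{2r'-1}, where the product is taken over i = 2, 3, ..., r in increasing order. -/

import Mathlib

/- We work in the symmetric group on `Fin n` (representing `{1, ..., n}` via `i ↦ i - 1`).
The paper multiplies permutations left-to-right: `(π₁ · π₂)(i) = π₂(π₁(i))`,
while Mathlib's `*` on `Equiv.Perm` is function composition: `(π₁ * π₂)(i) = π₁(π₂(i))`.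
Hence a paper product `A · B · C` is rendered below as `C * B * A`. -/

/-- `sP n i` is the transposition `sᵢ = (i, i+1)` (1-indexed), for `1 ≤ i ≤ n - 1`. -/
def sP (n i : ℕ) : Equiv.Perm (Fin n) :=
  if h : 1 ≤ i ∧ i < n then
    Equiv.swap ⟨i - 1, lt_of_le_of_lt (Nat.sub_le i 1) h.2⟩ ⟨i, h.2⟩
  else 1

/-- `tP n m` is `t_m = s₁ · s₂ ⋯ s_{m-1}` (paper's left-to-right product, so here the
factor for larger index is multiplied on the left).  `tP n 0 = tP n 1 = 1`. -/
def tP (n m : ℕ) : Equiv.Perm (Fin n) :=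
  (List.range (m - 1)).foldl (fun g j => sP n (j + 1) * g) 1

/-- `uP n r` is `u_{2r} = t_{2r-2} · s_{2r-1}` (paper order; here reversed). -/
def uP (n r : ℕ) : Equiv.Perm (Fin n) := sP n (2 * r - 1) * tP n (2 * r - 2)

/-- `vP n r` is `v_{2r} = t_{2r}²`. -/
def vP (n r : ℕ) : Equiv.Perm (Fin n) := (tP n (2 * r)) ^ 2

/- Since `t_M` acts as `k ↦ k - 1` on `2, …, M`, conjugating by `t_M` shifts every `s_k`
with `k + 1 < M` to `s_{k+1}`, while `t_{2i-1}⁻¹ · u_{2i} = s_{2i-2} · s_{2i-1}`.  Hence moving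
`t_{2r-1} = s_1 ⋯ s_{2r-2}` past `t_{2r'-1}` turns it into `s_2 ⋯ s_{2r-1}`, which is the
product on the right, two factors per index `i`. -/

theorem sP_inv (n k : ℕ) : (sP n k)⁻¹ = sP n k := by
  unfold sP
  split <;> simp

theorem sP_of_lt (n k : ℕ) (hk : 1 ≤ k) (hkn : k < n) :
    sP n k = Equiv.swap ⟨k - 1, by omega⟩ ⟨k, hkn⟩ :=
  dif_pos ⟨hk, hkn⟩

theorem sP_apply_of_ne (n k : ℕ) (x : Fin n) (h1 : x.val ≠ k - 1) (h2 : x.val ≠ k) :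
    sP n k x = x := by
  unfold sP
  split
  · exact Equiv.swap_apply_of_ne_of_ne (fun h => h1 (congrArg Fin.val h))
      (fun h => h2 (congrArg Fin.val h))
  · rfl

theorem tP_succ (n m : ℕ) : tP n (m + 1) = sP n m * tP n m := by
  cases m with
  | zero => simp [tP, sP]
  | succ m => simp [tP, List.range_succ]

theorem tP_apply_of_le (n m : ℕ) (x : Fin n) (hx : m ≤ x.val) : tP n m x = x := by
  induction m with
  | zero => rfl
  | succ m ih =>
    rw [tP_succ, Equiv.Perm.mul_apply, ih (by omega), sP_apply_of_ne n m x (by omega) (by omega)]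

theorem tP_apply_val (n m : ℕ) (x : Fin n) (h1 : 1 ≤ x.val) (h2 : x.val < m) :
    (tP n m x).val = x.val - 1 := by
  induction m with
  | zero => omega
  | succ m ih =>
    rw [tP_succ, Equiv.Perm.mul_apply]
    rcases Nat.lt_or_ge x.val m with hlt | hge
    · rw [sP_apply_of_ne n m _ (by omega) (by omega), ih hlt]
    · have hmn : m < n := by have := x.isLt; omega
      obtain rfl : x = ⟨m, hmn⟩ := Fin.ext (by simp only; omega)
      rw [tP_apply_of_le n m _ le_rfl, sP_of_lt n m (by omega) (by omega),
        Equiv.swap_apply_right]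

theorem sP_mul_tP (n k m : ℕ) (hk : 1 ≤ k) (hkm : k + 1 < m) (hmn : m ≤ n) :
    sP n k * tP n m = tP n m * sP n (k + 1) := by
  have hk_img : tP n m ⟨k, by omega⟩ = ⟨k - 1, by omega⟩ :=
    Fin.ext (tP_apply_val n m _ hk (show k < m by omega))
  have hk1_img : tP n m ⟨k + 1, by omega⟩ = ⟨k, by omega⟩ :=
    Fin.ext (tP_apply_val n m _ (by simp) (show k + 1 < m by omega))
  have hconj : sP n k = tP n m * sP n (k + 1) * (tP n m)⁻¹ := by
    have hswap : sP n (k + 1) = Equiv.swap ⟨k, by omega⟩ ⟨k + 1, by omega⟩ :=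
      sP_of_lt n (k + 1) (by omega) (by omega)
    rw [sP_of_lt n k hk (by omega), hswap, ← Equiv.swap_apply_apply, hk_img, hk1_img]
  rw [hconj, inv_mul_cancel_right]

theorem uP_mul_inv_tP (n i : ℕ) :
    uP n (i + 1) * (tP n (2 * i + 1))⁻¹ = sP n (2 * i + 1) * sP n (2 * i) := by
  rw [uP, tP_succ, mul_inv_rev, sP_inv, show 2 * (i + 1) - 1 = 2 * i + 1 by omega,
    show 2 * (i + 1) - 2 = 2 * i by omega, mul_assoc, mul_inv_cancel_left]

/-- `∏_{i=2}^{k+1} t_{2i-1}⁻¹ · u_{2i}` in the paper's notation, with `j = i - 2`. -/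
def tInvUProd (n k : ℕ) : Equiv.Perm (Fin n) :=
  (List.range k).foldl (fun acc j => uP n (j + 2) * (tP n (2 * (j + 2) - 1))⁻¹ * acc) 1

theorem tInvUProd_succ (n k : ℕ) :
    tInvUProd n (k + 1) = sP n (2 * k + 3) * sP n (2 * k + 2) * tInvUProd n k := by
  rw [tInvUProd, List.range_succ, List.foldl_append, List.foldl_cons, List.foldl_nil,
    show 2 * (k + 2) - 1 = 2 * (k + 1) + 1 by omega, uP_mul_inv_tP]
  rfl

theorem tP_odd_succ (n k : ℕ) :
    tP n (2 * k + 3) = sP n (2 * k + 2) * sP n (2 * k + 1) * tP n (2 * k + 1) := by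
  rw [tP_succ, tP_succ, mul_assoc]

theorem tP_odd_mul_tP (n k m : ℕ) (hkm : 2 * k + 1 < m) (hmn : m ≤ n) :
    tP n (2 * k + 1) * tP n m = tP n m * tInvUProd n k := by
  induction k with
  | zero => simp [tP, tInvUProd]
  | succ k ih =>
    calc tP n (2 * k + 3) * tP n m
        = sP n (2 * k + 2) * (sP n (2 * k + 1) * tP n m) * tInvUProd n k := by
          rw [tP_odd_succ, mul_assoc _ (tP n _), ih (by omega)]; group
      _ = sP n (2 * k + 2) * tP n m * (sP n (2 * k + 2) * tInvUProd n k) := by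
          rw [sP_mul_tP n (2 * k + 1) m (by omega) (by omega) hmn]; group
      _ = tP n m * tInvUProd n (k + 1) := by
          rw [sP_mul_tP n (2 * k + 2) m (by omega) (by omega) hmn, tInvUProd_succ]; group

theorem tt_exchange_general (n r r' : ℕ) (hrr : r < r')
    (hrn : 2 * r' - 1 ≤ n) :
    tP n (2 * r - 1) * tP n (2 * r' - 1) =
      tP n (2 * r' - 1) *
        (List.range (r - 1)).foldl
          (fun acc j => uP n (j + 2) * (tP n (2 * (j + 2) - 1))⁻¹ * acc) 1 := by
  rcases r with _ | r
  · simp [tP]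
  · rw [show 2 * (r + 1) - 1 = 2 * r + 1 by omega, Nat.add_sub_cancel]
    exact tP_odd_mul_tP n r (2 * r' - 1) (by omega) hrn

/-- for `2 ≤ r < r'` with `2r' - 1 ≤ n`,
`t_{2r'-1} · t_{2r-1} = ∏_{i=2}^{r} (t_{2i-1}⁻¹ · u_{2i}) · t_{2r'-1}` (paper
left-to-right product over `i` increasing; rendered here in composition order, i.e.
everything reversed).  The index `j ∈ range (r-1)` corresponds to `i = j + 2`. -/
theorem tt_exchange (n r r' : ℕ) (hn : 5 ≤ n) (hr : 2 ≤ r) (hrr : r < r')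
    (hrn : 2 * r' - 1 ≤ n) :
    tP n (2 * r - 1) * tP n (2 * r' - 1) =
      tP n (2 * r' - 1) *
        (List.range (r - 1)).foldl
          (fun acc j => uP n (j + 2) * (tP n (2 * (j + 2) - 1))⁻¹ * acc) 1 :=
  tt_exchange_general n r r' hrr hrn
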